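/- arXiv:2511.00938 — 2 statements merged into one kernel-verified Lean document; each statement's English description precedes it below -/
import Mathlib

section
/- Fix S > 0, θ ∈ (0,1], γ ∈ [0,1], and A_max > 0. For integrable f : [0,S] → [0,∞) with ∫₀^S f ≤ A_max and ‖f‖_∞ ≤ 2 A_max/S, define p_f(t) := (1−γ)(f(t) + θ A_max/S)/(∫₀^S f + θ A_max) + γ/S. Then for any two such functions f, g, ‖p_f − p_g‖_∞ ≤ (2(1−γ)/A_max)(1/θ + 1/θ²) ‖f − g‖_∞. -/
open MeasureTheory

/- Write `p_f(t) = (1 - γ) a / D + γ / S` with `a = f t + θ A / S`, `D = ∫ f + θ A ≥ θ A`,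
and `p_g` likewise with `b`, `E`. Then `a / D - b / E = (a - b) / D - b (D - E) / (D E)`,
where `|a - b| ≤ ε`, `|D - E| ≤ S ε`, `b ≤ (2 + θ) A / S` and both denominators are at
least `θ A`; the two terms give `ε / (θ A)` and `(2 + θ) ε / (θ² A)`. -/

theorem abs_setIntegral_sub_le_of_abs_sub_le {α : Type*} [MeasurableSpace α] {μ : Measure α}
    {s : Set α} {f g : α → ℝ} {ε : ℝ} (hs : μ s < ⊤) (hf : IntegrableOn f s μ)
    (hg : IntegrableOn g s μ) (hfg : ∀ x ∈ s, |f x - g x| ≤ ε) :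
    |(∫ x in s, f x ∂μ) - ∫ x in s, g x ∂μ| ≤ ε * μ.real s := by
  rw [← integral_sub hf hg]
  exact norm_setIntegral_le_of_norm_le_const (f := fun x => f x - g x) hs hfg

theorem div_sub_div_eq_sub_div_sub_mul_div {a b D E : ℝ} (hD : D ≠ 0) (hE : E ≠ 0) :
    a / D - b / E = (a - b) / D - b * (D - E) / (D * E) := by
  field_simp
  ring

theorem abs_div_sub_div_le {a b D E m : ℝ} (hm : 0 < m) (hD : m ≤ D) (hE : m ≤ E) :
    |a / D - b / E| ≤ |a - b| / m + |b| * |D - E| / m ^ 2 := by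
  have hD0 : 0 < D := hm.trans_le hD
  have hE0 : 0 < E := hm.trans_le hE
  rw [div_sub_div_eq_sub_div_sub_mul_div hD0.ne' hE0.ne']
  calc |(a - b) / D - b * (D - E) / (D * E)|
      ≤ |(a - b) / D| + |b * (D - E) / (D * E)| := abs_sub _ _
    _ = |a - b| / D + |b| * |D - E| / (D * E) := by
      rw [abs_div, abs_div, abs_mul, abs_of_pos hD0, abs_of_pos (mul_pos hD0 hE0)]
    _ ≤ |a - b| / m + |b| * |D - E| / m ^ 2 := by
      gcongr
      rw [sq]
      exact mul_le_mul hD hE hm.le hD0.le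

theorem density_sup_norm_lipschitz_general
    (S : ℝ) (hS : 0 < S)
    (θ : ℝ) (hθ : θ ∈ Set.Ioc (0 : ℝ) 1)
    (γ : ℝ) (hγ : γ ∈ Set.Icc (0 : ℝ) 1)
    (Amax : ℝ) (hAmax : 0 < Amax)
    (f g : ℝ → ℝ)
    (hfint : IntegrableOn f (Set.Icc 0 S)) (hgint : IntegrableOn g (Set.Icc 0 S))
    (hf0 : ∀ t ∈ Set.Icc (0 : ℝ) S, 0 ≤ f t) (hg0 : ∀ t ∈ Set.Icc (0 : ℝ) S, 0 ≤ g t)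
    (hgbd : ∀ t ∈ Set.Icc (0 : ℝ) S, g t ≤ 2 * Amax / S)
    (pf pg : ℝ → ℝ)
    (hpf : ∀ t, pf t = (1 - γ) * (f t + θ * Amax / S)
        / ((∫ s in Set.Icc (0 : ℝ) S, f s) + θ * Amax) + γ / S)
    (hpg : ∀ t, pg t = (1 - γ) * (g t + θ * Amax / S)
        / ((∫ s in Set.Icc (0 : ℝ) S, g s) + θ * Amax) + γ / S)
    (ε : ℝ) (hε : ∀ t ∈ Set.Icc (0 : ℝ) S, |f t - g t| ≤ ε) :
    ∀ t ∈ Set.Icc (0 : ℝ) S,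
      |pf t - pg t| ≤ (2 * (1 - γ) / Amax) * (1 / θ + 1 / θ ^ 2) * ε := by
  intro t ht
  set If := ∫ s in Set.Icc (0 : ℝ) S, f s
  set Ig := ∫ s in Set.Icc (0 : ℝ) S, g s
  have hθ0 : 0 < θ := hθ.1
  have hγ1 : 0 ≤ 1 - γ := sub_nonneg.2 hγ.2
  have hε0 : 0 ≤ ε := (abs_nonneg _).trans (hε 0 ⟨le_rfl, hS.le⟩)
  have hIf : θ * Amax ≤ If + θ * Amax :=
    le_add_of_nonneg_left (setIntegral_nonneg measurableSet_Icc hf0)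
  have hIg : θ * Amax ≤ Ig + θ * Amax :=
    le_add_of_nonneg_left (setIntegral_nonneg measurableSet_Icc hg0)
  have hIfg : |If - Ig| ≤ ε * S := by
    simpa [Real.volume_real_Icc_of_le hS.le] using
      abs_setIntegral_sub_le_of_abs_sub_le measure_Icc_lt_top hfint hgint hε
  have hb : |g t + θ * Amax / S| ≤ (2 + θ) * Amax / S := by
    rw [abs_of_nonneg (by have := hg0 t ht; positivity), add_mul, add_div]
    linarith [hgbd t ht]
  have hsplit := abs_div_sub_div_le (a := f t + θ * Amax / S) (b := g t + θ * Amax / S)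
    (by positivity) hIf hIg
  rw [add_sub_add_right_eq_sub, add_sub_add_right_eq_sub] at hsplit
  calc |pf t - pg t|
      = (1 - γ) * |(f t + θ * Amax / S) / (If + θ * Amax)
          - (g t + θ * Amax / S) / (Ig + θ * Amax)| := by
        rw [hpf, hpg, ← abs_of_nonneg hγ1, ← abs_mul, abs_of_nonneg hγ1]
        ring_nf
    _ ≤ (1 - γ) * (ε / (θ * Amax) + (2 + θ) * Amax / S * (ε * S) / (θ * Amax) ^ 2) := by
        gcongr
        refine hsplit.trans (add_le_add (by gcongr; exact hε t ht) ?_)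
        gcongr
    _ = (2 * (1 - γ) / Amax) * (1 / θ + 1 / θ ^ 2) * ε := by
        field_simp
        ring

/-- Lipschitz continuity of the regularized-mixed density with respect to the sup norm:
`‖p_f − p_g‖_∞ ≤ (2(1−γ)/A_max)(1/θ + 1/θ²) ‖f − g‖_∞`. -/
theorem density_sup_norm_lipschitz
    (S : ℝ) (hS : 0 < S)
    (θ : ℝ) (hθ : θ ∈ Set.Ioc (0 : ℝ) 1)
    (γ : ℝ) (hγ : γ ∈ Set.Icc (0 : ℝ) 1)
    (Amax : ℝ) (hAmax : 0 < Amax)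
    (f g : ℝ → ℝ)
    (hfint : IntegrableOn f (Set.Icc 0 S)) (hgint : IntegrableOn g (Set.Icc 0 S))
    (hf0 : ∀ t ∈ Set.Icc (0 : ℝ) S, 0 ≤ f t) (hg0 : ∀ t ∈ Set.Icc (0 : ℝ) S, 0 ≤ g t)
    (hfA : (∫ t in Set.Icc (0 : ℝ) S, f t) ≤ Amax)
    (hgA : (∫ t in Set.Icc (0 : ℝ) S, g t) ≤ Amax)
    (hfbd : ∀ t ∈ Set.Icc (0 : ℝ) S, f t ≤ 2 * Amax / S)
    (hgbd : ∀ t ∈ Set.Icc (0 : ℝ) S, g t ≤ 2 * Amax / S)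
    (pf pg : ℝ → ℝ)
    (hpf : ∀ t, pf t = (1 - γ) * (f t + θ * Amax / S)
        / ((∫ s in Set.Icc (0 : ℝ) S, f s) + θ * Amax) + γ / S)
    (hpg : ∀ t, pg t = (1 - γ) * (g t + θ * Amax / S)
        / ((∫ s in Set.Icc (0 : ℝ) S, g s) + θ * Amax) + γ / S)
    (ε : ℝ) (hε : ∀ t ∈ Set.Icc (0 : ℝ) S, |f t - g t| ≤ ε) :
    ∀ t ∈ Set.Icc (0 : ℝ) S,
      |pf t - pg t| ≤ (2 * (1 - γ) / Amax) * (1 / θ + 1 / θ ^ 2) * ε :=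
  density_sup_norm_lipschitz_general S hS θ hθ γ hγ Amax hAmax f g hfint hgint hf0 hg0 hgbd pf pg
    hpf hpg ε hε
end

section
/- Let K ~ Binomial(n, π) with π ∈ [0,1] arbitrary, and define p̂ = (1+K)/(n+1). If π itself is a super-uniform random variable (i.e., P(π ≤ α) ≤ α for all α ∈ (0,1)) and, conditional on π, K is Binomial(n, π), then P(p̂ ≤ α) ≤ α for all α ∈ (0,1). -/
open Set MeasureTheory
open scoped ENNReal

/-! The lower binomial tail is a Beta tail: for `m ≤ n`,
`P(Bin(n+1, p) ≤ m) = (n+1) ∫_p^1 b_{n,m}(t) dt` with `b_{n,m}` a Bernstein polynomial, because the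
derivative in `p` of the tail telescopes. Averaging over `π` and exchanging the integrals gives
`P(K ≤ m) = (n+1) ∫_0^1 b_{n,m}(t) P(π < t) dt`, and super-uniformity bounds `P(π < t)` by `t`;
the remaining Beta moment `(n+1) ∫_0^1 t b_{n,m}(t) dt` is `(m+1)/(n+2)`. The event `p̂ ≤ α` is
`K ≤ m` for `m + 1 = ⌊α(n+1)⌋`. -/

namespace bernsteinPolynomial

open Polynomial Finset

variable (R : Type*) [CommRing R]

theorem derivative_sum_range (n m : ℕ) :
    derivative (∑ k ∈ range (m + 1), bernsteinPolynomial R (n + 1) k) =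
      -((n + 1 : R[X]) * bernsteinPolynomial R n m) := by
  induction m with
  | zero =>
    simp only [zero_add, range_one, sum_singleton, derivative_zero, Nat.cast_add, Nat.cast_one,
      add_tsub_cancel_right]
    ring
  | succ m ih =>
    rw [sum_range_succ, derivative_add, ih, derivative_succ_aux]
    ring

theorem natCast_add_one_mul_X_mul (n m : ℕ) :
    (n + 1 : R[X]) * (X * bernsteinPolynomial R n m) =
      ((m : R[X]) + 1) * bernsteinPolynomial R (n + 1) (m + 1) := by
  have hchoose := congrArg (Nat.cast : ℕ → R[X]) (Nat.add_one_mul_choose_eq n m)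
  push_cast at hchoose
  simp only [bernsteinPolynomial, Nat.add_sub_add_right]
  linear_combination (X ^ (m + 1) * (1 - X) ^ (n - m)) * hchoose

theorem eval_nonneg (n k : ℕ) {t : ℝ} (ht : t ∈ Icc (0 : ℝ) 1) :
    0 ≤ (bernsteinPolynomial ℝ n k).eval t := by
  obtain ⟨ht0, ht1⟩ := ht
  have h1t : 0 ≤ 1 - t := sub_nonneg.2 ht1
  simp only [bernsteinPolynomial, eval_mul, eval_pow, eval_sub, eval_one, eval_X, eval_natCast]
  positivity

theorem sum_range_eval_eq_integral {n m : ℕ} (hm : m ≤ n) (p : ℝ) :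
    ∑ k ∈ range (m + 1), (bernsteinPolynomial ℝ (n + 1) k).eval p =
      (n + 1) * ∫ t in p..1, (bernsteinPolynomial ℝ n m).eval t := by
  set P := ∑ k ∈ range (m + 1), bernsteinPolynomial ℝ (n + 1) k
  have hP1 : P.eval 1 = 0 := by
    simp only [P, eval_finsetSum, eval_at_1]
    exact sum_eq_zero fun k hk => if_neg (by simp at hk; omega)
  have hFTC := intervalIntegral.integral_eq_sub_of_hasDerivAt (fun t _ => P.hasDerivAt t)
    (P.derivative.continuous.intervalIntegrable p 1)
  rw [derivative_sum_range, hP1] at hFTC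
  simp only [P, eval_finsetSum, eval_neg, eval_mul, eval_add, eval_natCast, eval_one,
    intervalIntegral.integral_neg, intervalIntegral.integral_const_mul] at hFTC
  linarith

theorem integral_eval {n k : ℕ} (hk : k ≤ n) :
    ∫ t in (0 : ℝ)..1, (bernsteinPolynomial ℝ n k).eval t = 1 / (n + 1) := by
  have h := sum_range_eval_eq_integral hk 0
  simp only [eval_at_0, sum_ite_eq', Finset.mem_range, Nat.zero_lt_succ, if_true] at h
  field_simp
  linarith

theorem integral_mul_eval {n m : ℕ} (hm : m ≤ n) :
    (n + 1) * ∫ t in (0 : ℝ)..1, t * (bernsteinPolynomial ℝ n m).eval t = (m + 1) / (n + 2) := by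
  have h t := congrArg (eval t) (natCast_add_one_mul_X_mul ℝ n m)
  simp only [eval_mul, eval_add, eval_natCast, eval_one, eval_X] at h
  rw [← intervalIntegral.integral_const_mul]
  simp only [h, intervalIntegral.integral_const_mul, integral_eval (Nat.succ_le_succ hm)]
  push_cast
  field_simp
  ring

end bernsteinPolynomial

theorem measureReal_preimage_eq_integral_sum_of_condExp_ae_eq {Ω β : Type*} [MeasurableSpace β]
    [MeasurableSingletonClass β] [DecidableEq β] {m mΩ : MeasurableSpace Ω} {μ : Measure Ω}
    [IsFiniteMeasure μ] (hm : m ≤ mΩ)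
    {K : Ω → β} (hK : Measurable K) {g : β → Ω → ℝ}
    (hg : ∀ b, μ[fun ω => if K ω = b then (1 : ℝ) else 0 | m] =ᵐ[μ] g b) (s : Finset β) :
    μ.real (K ⁻¹' s) = ∫ ω, ∑ b ∈ s, g b ω ∂μ := by
  have hfiber b : μ.real (K ⁻¹' {b}) = ∫ ω, g b ω ∂μ := by
    have hind : (K ⁻¹' {b}).indicator 1 = fun ω => if K ω = b then (1 : ℝ) else 0 := by
      ext ω; simp [Set.indicator]
    rw [← integral_indicator_one (hK (measurableSet_singleton b)), hind, ← integral_condExp hm]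
    exact integral_congr_ae (hg b)
  rw [integral_finsetSum s fun b _ => integrable_condExp.congr (hg b),
    ← sum_measureReal_preimage_singleton s fun b _ => hK (measurableSet_singleton b)]
  exact Finset.sum_congr rfl fun b _ => hfiber b

section SuperUniform

variable {Ω : Type*} {mΩ : MeasurableSpace Ω}

def IsSuperUniform (π : Ω → ℝ) (μ : Measure Ω) : Prop :=
  ∀ α ∈ Ioo (0 : ℝ) 1, μ {ω | π ω ≤ α} ≤ ENNReal.ofReal α

variable {μ : Measure Ω} [IsProbabilityMeasure μ] {π : Ω → ℝ}

theorem IsSuperUniform.measure_lt_le (hsuper : IsSuperUniform π μ) {t : ℝ} (ht : t ∈ Ioc 0 1) :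
    μ {ω | π ω < t} ≤ ENNReal.ofReal t := by
  rcases ht.2.lt_or_eq with ht1 | rfl
  · exact (measure_mono fun ω (hω : π ω < t) => hω.le).trans (hsuper t ⟨ht.1, ht1⟩)
  · simpa using prob_le_one

theorem lintegral_setLIntegral_Ioc_le_of_isSuperUniform (hπ : Measurable π)
    (hπ0 : ∀ ω, 0 ≤ π ω) (hsuper : IsSuperUniform π μ) {f : ℝ → ℝ≥0∞} (hf : Measurable f) :
    ∫⁻ ω, (∫⁻ t in Ioc (π ω) 1, f t) ∂μ ≤ ∫⁻ t in Ioc 0 1, f t * ENNReal.ofReal t := by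
  have hslice ω : ∫⁻ t in Ioc (π ω) 1, f t = ∫⁻ t in Ioc 0 1, (Ioi (π ω)).indicator f t := by
    rw [lintegral_indicator measurableSet_Ioi, Measure.restrict_restrict measurableSet_Ioi,
      inter_comm, Ioc_inter_Ioi, sup_eq_right.2 (hπ0 ω)]
  have hjoint : AEMeasurable (Function.uncurry fun ω t => (Ioi (π ω)).indicator f t)
      (μ.prod (volume.restrict (Ioc 0 1))) :=
    ((hf.comp measurable_snd).indicator
      (measurableSet_lt (hπ.comp measurable_fst) measurable_snd)).aemeasurable
  have hfiber t : ∫⁻ ω, (Ioi (π ω)).indicator f t ∂μ = f t * μ {ω | π ω < t} :=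
    lintegral_indicator_const (hπ measurableSet_Iio) (f t)
  calc ∫⁻ ω, (∫⁻ t in Ioc (π ω) 1, f t) ∂μ
      = ∫⁻ t in Ioc 0 1, ∫⁻ ω, (Ioi (π ω)).indicator f t ∂μ := by
        simp_rw [hslice]; exact lintegral_lintegral_swap hjoint
    _ = ∫⁻ t in Ioc 0 1, f t * μ {ω | π ω < t} := by simp_rw [hfiber]
    _ ≤ ∫⁻ t in Ioc 0 1, f t * ENNReal.ofReal t :=
        setLIntegral_mono' measurableSet_Ioc fun t ht => by gcongr; exact hsuper.measure_lt_le ht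

theorem integral_intervalIntegral_le_of_isSuperUniform (hπ : Measurable π)
    (hπ01 : ∀ ω, π ω ∈ Icc 0 1) (hsuper : IsSuperUniform π μ) {f : ℝ → ℝ} (hf : Continuous f)
    (hf0 : ∀ t ∈ Icc (0 : ℝ) 1, 0 ≤ f t) :
    ∫ ω, (∫ t in π ω..1, f t) ∂μ ≤ ∫ t in (0 : ℝ)..1, t * f t := by
  have htail : ∀ p ∈ Icc (0 : ℝ) 1,
      ENNReal.ofReal (∫ t in p..1, f t) = ∫⁻ t in Ioc p 1, ENNReal.ofReal (f t) := by
    intro p hp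
    rw [intervalIntegral.integral_of_le hp.2]
    exact ofReal_integral_eq_lintegral_ofReal hf.integrableOn_Ioc
      (ae_restrict_of_forall_mem measurableSet_Ioc fun t ht => hf0 t ⟨hp.1.trans ht.1.le, ht.2⟩)
  have htail_nonneg : ∀ p ∈ Icc (0 : ℝ) 1, 0 ≤ ∫ t in p..1, f t := fun p hp =>
    intervalIntegral.integral_nonneg hp.2 fun t ht => hf0 t ⟨hp.1.trans ht.1, ht.2⟩
  have htail_cont : Continuous fun p => ∫ t in p..1, f t := by
    simp_rw [intervalIntegral.integral_symm (1 : ℝ)]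
    exact (intervalIntegral.continuous_primitive (fun a b => hf.intervalIntegrable a b) 1).neg
  have hmoment : 0 ≤ ∫ t in (0 : ℝ)..1, t * f t :=
    intervalIntegral.integral_nonneg zero_le_one fun t ht => mul_nonneg ht.1 (hf0 t ht)
  rw [integral_eq_lintegral_of_nonneg_ae (ae_of_all _ fun ω => htail_nonneg _ (hπ01 ω))
    (htail_cont.measurable.comp hπ).aestronglyMeasurable]
  have hmoment_cont : Continuous fun t : ℝ => t * f t := continuous_id.mul hf
  refine ENNReal.toReal_le_of_le_ofReal hmoment ?_
  calc ∫⁻ ω, ENNReal.ofReal (∫ t in π ω..1, f t) ∂μ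
      = ∫⁻ ω, (∫⁻ t in Ioc (π ω) 1, ENNReal.ofReal (f t)) ∂μ :=
        lintegral_congr fun ω => htail _ (hπ01 ω)
    _ ≤ ∫⁻ t in Ioc 0 1, ENNReal.ofReal (f t) * ENNReal.ofReal t :=
        lintegral_setLIntegral_Ioc_le_of_isSuperUniform hπ (fun ω => (hπ01 ω).1) hsuper
          hf.measurable.ennreal_ofReal
    _ = ENNReal.ofReal (∫ t in (0 : ℝ)..1, t * f t) := by
        rw [intervalIntegral.integral_of_le zero_le_one,
          ofReal_integral_eq_lintegral_ofReal hmoment_cont.integrableOn_Ioc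
            (ae_restrict_of_forall_mem measurableSet_Ioc fun t ht =>
              mul_nonneg ht.1.le (hf0 t (Ioc_subset_Icc_self ht)))]
        refine setLIntegral_congr_fun measurableSet_Ioc fun t ht => ?_
        rw [mul_comm, ENNReal.ofReal_mul ht.1.le]

theorem measure_le_le_of_isSuperUniform_of_condExp_binomial (N : ℕ) (hπ : Measurable π)
    (hπ01 : ∀ ω, π ω ∈ Icc 0 1) (hsuper : IsSuperUniform π μ) {K : Ω → ℕ} (hK : Measurable K)
    (hbinom : ∀ k : ℕ,
      μ[(fun ω => if K ω = k then (1 : ℝ) else 0) | MeasurableSpace.comap π inferInstance]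
        =ᵐ[μ] fun ω => (N.choose k : ℝ) * π ω ^ k * (1 - π ω) ^ (N - k)) (m : ℕ) :
    μ {ω | K ω ≤ m} ≤ ENNReal.ofReal ((m + 1) / (N + 1)) := by
  rcases lt_or_ge m N with hmN | hNm
  swap
  · refine prob_le_one.trans (ENNReal.one_le_ofReal.2 ((one_le_div (by positivity)).2 ?_))
    exact_mod_cast Nat.succ_le_succ hNm
  obtain ⟨n, rfl⟩ : ∃ n, N = n + 1 := ⟨N - 1, by omega⟩
  have hm : m ≤ n := by omega
  have hbern : ∀ k,
      μ[(fun ω => if K ω = k then (1 : ℝ) else 0) | MeasurableSpace.comap π inferInstance]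
        =ᵐ[μ] fun ω => (bernsteinPolynomial ℝ (n + 1) k).eval (π ω) := fun k =>
    (hbinom k).trans (.of_eq (by ext ω; simp [bernsteinPolynomial]))
  have hset : {ω | K ω ≤ m} = K ⁻¹' (Finset.range (m + 1) : Set ℕ) := by ext ω; simp
  rw [← ofReal_measureReal, hset,
    measureReal_preimage_eq_integral_sum_of_condExp_ae_eq hπ.comap_le hK hbern]
  refine ENNReal.ofReal_le_ofReal ?_
  calc ∫ ω, ∑ k ∈ Finset.range (m + 1), (bernsteinPolynomial ℝ (n + 1) k).eval (π ω) ∂μ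
      = (n + 1) * ∫ ω, (∫ t in π ω..1, (bernsteinPolynomial ℝ n m).eval t) ∂μ := by
        simp_rw [bernsteinPolynomial.sum_range_eval_eq_integral hm, integral_const_mul]
    _ ≤ (n + 1) * ∫ t in (0 : ℝ)..1, t * (bernsteinPolynomial ℝ n m).eval t := by
        gcongr
        exact integral_intervalIntegral_le_of_isSuperUniform hπ hπ01 hsuper
          (Polynomial.continuous _) fun t ht => bernsteinPolynomial.eval_nonneg n m ht
    _ = (m + 1) / ((n + 1 : ℕ) + 1) := by
        rw [bernsteinPolynomial.integral_mul_eval hm]; push_cast; ring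

end SuperUniform

theorem mc_pvalue_superuniform_general
    {Ω : Type*} {mΩ : MeasurableSpace Ω} (μ : Measure Ω) [IsProbabilityMeasure μ]
    (n : ℕ)
    (π : Ω → ℝ) (hπmeas : Measurable π)
    (hπ : ∀ ω, π ω ∈ Set.Icc (0 : ℝ) 1)
    (hsuper : ∀ α ∈ Set.Ioo (0 : ℝ) 1, μ {ω | π ω ≤ α} ≤ ENNReal.ofReal α)
    (K : Ω → ℕ) (hKmeas : Measurable K)
    (hbinom : ∀ k : ℕ,
      μ[(fun ω => if K ω = k then (1 : ℝ) else 0) | MeasurableSpace.comap π inferInstance]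
        =ᵐ[μ] fun ω => (n.choose k : ℝ) * π ω ^ k * (1 - π ω) ^ (n - k)) :
    ∀ α ∈ Set.Ioo (0 : ℝ) 1,
      μ {ω | (1 + (K ω : ℝ)) / (n + 1) ≤ α} ≤ ENNReal.ofReal α := by
  rintro α ⟨hα0, -⟩
  set M := ⌊α * (n + 1)⌋₊
  have hevent : {ω | (1 + (K ω : ℝ)) / (n + 1) ≤ α} = {ω | K ω + 1 ≤ M} := by
    ext ω
    rw [mem_ofPred_eq, mem_ofPred_eq, div_le_iff₀ (by positivity), Nat.le_floor_iff (by positivity)]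
    push_cast
    rw [add_comm]
  rw [hevent]
  rcases Nat.eq_zero_or_pos M with hM | hM
  · simp [hM]
  obtain ⟨m, hm⟩ := Nat.exists_eq_add_one_of_ne_zero hM.ne'
  have hMle : ((m + 1 : ℕ) : ℝ) ≤ α * (n + 1) := hm ▸ Nat.floor_le (by positivity)
  have hK : {ω | K ω + 1 ≤ M} = {ω | K ω ≤ m} := by ext ω; simp only [mem_ofPred_eq]; omega
  rw [hK]
  refine (measure_le_le_of_isSuperUniform_of_condExp_binomial n hπmeas hπ hsuper hKmeas hbinom
    m).trans (ENNReal.ofReal_le_ofReal ?_)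
  rw [div_le_iff₀ (by positivity)]
  exact_mod_cast hMle

/-- Conservativeness of the '+1'-corrected Monte Carlo permutation p-value: if the exact
permutation p-value `π` is super-uniform and, conditionally on `π`, `K ~ Binomial(n, π)`, then
`p̂ = (1+K)/(n+1)` satisfies `P(p̂ ≤ α) ≤ α` for all `α ∈ (0,1)`. -/
theorem mc_pvalue_superuniform
    {Ω : Type*} {mΩ : MeasurableSpace Ω} (μ : Measure Ω) [IsProbabilityMeasure μ]
    (n : ℕ) (hn : 1 ≤ n)
    (π : Ω → ℝ) (hπmeas : Measurable π)
    (hπ : ∀ ω, π ω ∈ Set.Icc (0 : ℝ) 1)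
    (hsuper : ∀ α ∈ Set.Ioo (0 : ℝ) 1, μ {ω | π ω ≤ α} ≤ ENNReal.ofReal α)
    (K : Ω → ℕ) (hKmeas : Measurable K) (hKle : ∀ ω, K ω ≤ n)
    (hbinom : ∀ k : ℕ,
      μ[(fun ω => if K ω = k then (1 : ℝ) else 0) | MeasurableSpace.comap π inferInstance]
        =ᵐ[μ] fun ω => (n.choose k : ℝ) * π ω ^ k * (1 - π ω) ^ (n - k)) :
    ∀ α ∈ Set.Ioo (0 : ℝ) 1,
      μ {ω | (1 + (K ω : ℝ)) / (n + 1) ≤ α} ≤ ENNReal.ofReal α :=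
  mc_pvalue_superuniform_general (mΩ := mΩ) μ n π hπmeas hπ hsuper K hKmeas hbinom
end
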